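/- Let V be a finite type, K ⊆ V a terminal set, I a finite index set, and α ∈ ℝ≥0∞ with α ≥ 1. For each i ∈ I let V_i, W_i, K_i ⊆ V be subsets with K_i ⊆ K ∩ V_i ∩ W_i, and let w_i, w̃_i : V → V → ℝ≥0∞ be symmetric weight functions with w_i a b = ∞ unless a, b ∈ V_i, and w̃_i a b = ∞ unless a, b ∈ W_i. Assume: (a) for all i ≠ j, each of V_i ∩ V_j, V_i ∩ W_j, and W_i ∩ W_j is contained in K; (b) for each i, V_i ∩ K ⊆ K_i and W_i ∩ K ⊆ K_i; and (c) each w̃_i is an α-quality distance sparsifier of w_i with respect to K_i, i.e., for all s, t ∈ K_i, d_{w_i}(s,t) ≤ d_{w̃_i}(s,t) ≤ α · d_{w_i}(s,t). Define w := fun a b => ⨅ i, w_i a b and w̃ := fun a b => ⨅ i, w̃_i a b (the union graphs, taking the cheapest parallel edge). Then for all s, t ∈ K, d_w(s,t) ≤ d_{w̃}(s,t) ≤ α · d_w(s,t). (The union of α-quality vertex distance sparsifiers of the regions of an edge partition, with regions sharing only terminal vertices, is an α-quality distance sparsifier with respect to the full terminal set K; this is the correctness claim for answering shortest-path queries in the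 proof of Theorem 1.3 of the paper.) -/

import Mathlib

open BigOperators
open scoped ENNReal

/-- The walk distance from `s` to `t` with respect to the symmetric weight function `w`:
the infimum over all walks `s = v₀, v₁, …, v_k = t` of the total weight of the walk. -/
noncomputable def walkDist {V : Type*} (w : V → V → ℝ≥0∞) (s t : V) : ℝ≥0∞ :=
  ⨅ (k : ℕ) (p : Fin (k + 1) → V) (_ : p 0 = s) (_ : p (Fin.last k) = t),
    ∑ i : Fin k, w (p i.castSucc) (p i.succ)

/-!
A walk in the union graph splits at the vertices where it passes from one region to another;
such a vertex lies in two regions, hence in `K`, hence is a terminal of both. Each piece is a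
walk inside a single region between two of its terminals, so its distance in the union of the
sparsifiers is at most `α` times its length, and the triangle inequality adds up these bounds.
The lower bound is the same argument with the two families exchanged and `α = 1`. For `α = ∞`
one needs a walk of length exactly `0` when the distance is `0`; it exists because `V` is
finite, so the positive edge weights are bounded away from `0`.
-/

section Walks

variable {V : Type*} (w : V → V → ℝ≥0∞)

noncomputable def walkWeight {k : ℕ} (p : Fin (k + 1) → V) : ℝ≥0∞ :=
  ∑ i : Fin k, w (p i.castSucc) (p i.succ)

lemma walkWeight_succ {k : ℕ} (p : Fin (k + 2) → V) :
    walkWeight w p = w (p 0) (p 1) + walkWeight w (Fin.tail p) := by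
  simp only [walkWeight, Fin.sum_univ_succ, Fin.castSucc_zero, Fin.succ_zero_eq_one,
    Fin.tail, Fin.succ_castSucc]

lemma walkWeight_cons {k : ℕ} (a : V) (p : Fin (k + 1) → V) :
    walkWeight w (Fin.cons a p : Fin (k + 2) → V) = w a (p 0) + walkWeight w p := by
  rw [walkWeight_succ]
  rfl

lemma walkDist_le_walkWeight {k : ℕ} (p : Fin (k + 1) → V) :
    walkDist w (p 0) (p (Fin.last k)) ≤ walkWeight w p :=
  iInf_le_of_le k <| iInf_le_of_le p <| iInf_le_of_le rfl <| iInf_le_of_le rfl le_rfl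

variable {w}

lemma le_walkDist {x : ℝ≥0∞} {s t : V}
    (h : ∀ (k : ℕ) (p : Fin (k + 1) → V), p 0 = s → p (Fin.last k) = t → x ≤ walkWeight w p) :
    x ≤ walkDist w s t :=
  le_iInf fun k => le_iInf fun p => le_iInf fun h0 => le_iInf fun hl => h k p h0 hl

variable (w)

lemma walkDist_self (s : V) : walkDist w s s = 0 :=
  nonpos_iff_eq_zero.mp <| by simpa [walkWeight] using walkDist_le_walkWeight w (k := 0) ![s]

lemma walkDist_le_weight (a b : V) : walkDist w a b ≤ w a b := by
  simpa [walkWeight] using walkDist_le_walkWeight w ![a, b]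

lemma walkDist_le_weight_add (a x b : V) : walkDist w a b ≤ w a x + walkDist w x b := by
  conv_rhs => rw [walkDist]
  simp only [ENNReal.add_iInf]
  refine le_iInf fun k => le_iInf fun p => le_iInf fun h0 => le_iInf fun hl => ?_
  subst h0 hl
  exact (walkDist_le_walkWeight w (Fin.cons a p : Fin (k + 2) → V)).trans_eq
    (walkWeight_cons w a p)

lemma walkDist_le_walkWeight_add {k : ℕ} (p : Fin (k + 1) → V) (b : V) :
    walkDist w (p 0) b ≤ walkWeight w p + walkDist w (p (Fin.last k)) b := by
  induction k with
  | zero => simp [walkWeight]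
  | succ k ih =>
    calc walkDist w (p 0) b ≤ w (p 0) (p 1) + walkDist w (p 1) b := walkDist_le_weight_add w _ _ _
      _ ≤ w (p 0) (p 1) + (walkWeight w (Fin.tail p) + walkDist w (p (Fin.last (k + 1))) b) := by
        gcongr
        simpa [Fin.tail, Fin.succ_last] using ih (Fin.tail p)
      _ = walkWeight w p + walkDist w (p (Fin.last (k + 1))) b := by
        rw [walkWeight_succ w p]
        exact (add_assoc _ _ _).symm

lemma walkDist_triangle (a c b : V) : walkDist w a b ≤ walkDist w a c + walkDist w c b := by
  conv_rhs => rw [walkDist]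
  simp only [ENNReal.iInf_add]
  refine le_iInf fun k => le_iInf fun p => le_iInf fun h0 => le_iInf fun hl => ?_
  subst h0 hl
  exact walkDist_le_walkWeight_add w p b

variable {w}

lemma walkWeight_mono {w' : V → V → ℝ≥0∞} (h : ∀ a b, w a b ≤ w' a b) {k : ℕ}
    (p : Fin (k + 1) → V) : walkWeight w p ≤ walkWeight w' p :=
  Finset.sum_le_sum fun _ _ => h _ _

lemma walkDist_mono {w' : V → V → ℝ≥0∞} (h : ∀ a b, w a b ≤ w' a b) (s t : V) :
    walkDist w s t ≤ walkDist w' s t :=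
  le_walkDist fun _ p h0 hl => h0 ▸ hl ▸ (walkDist_le_walkWeight w p).trans (walkWeight_mono h p)

lemma walkDist_iInf_le {I : Type*} (v : I → V → V → ℝ≥0∞) (i : I) (s t : V) :
    walkDist (fun a b => ⨅ j, v j a b) s t ≤ walkDist (v i) s t :=
  walkDist_mono (fun _ _ => iInf_le _ i) s t

lemma exists_walkWeight_eq_zero [Fintype V] {s t : V} (h : walkDist w s t = 0) :
    ∃ (k : ℕ) (p : Fin (k + 1) → V), p 0 = s ∧ p (Fin.last k) = t ∧ walkWeight w p = 0 := by
  classical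
  -- the least positive edge weight; a walk lighter than it uses only edges of weight zero
  set δ := (Finset.univ.filter fun e : V × V => w e.1 e.2 ≠ 0).inf fun e => w e.1 e.2
  have hδ : 0 < δ := (Finset.lt_inf_iff ENNReal.zero_lt_top).2 fun e he =>
    pos_iff_ne_zero.2 (Finset.mem_filter.1 he).2
  rw [← h, walkDist] at hδ
  simp only [iInf_lt_iff] at hδ
  obtain ⟨k, p, h0, hl, hp⟩ := hδ
  refine ⟨k, p, h0, hl, Finset.sum_eq_zero fun i _ => ?_⟩
  by_contra hi
  have : δ ≤ w (p i.castSucc) (p i.succ) :=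
    Finset.inf_le (f := fun e : V × V => w e.1 e.2) (b := (p i.castSucc, p i.succ))
      (Finset.mem_filter.2 ⟨Finset.mem_univ _, hi⟩)
  exact (this.trans (Finset.single_le_sum (f := fun j : Fin k => w (p j.castSucc) (p j.succ))
    (fun _ _ => zero_le) (Finset.mem_univ i))).not_gt hp

lemma le_mul_walkDist [Fintype V] {x β : ℝ≥0∞} (hβ : β ≠ 0) {s t : V}
    (h : ∀ (k : ℕ) (p : Fin (k + 1) → V), p 0 = s → p (Fin.last k) = t →
      x ≤ β * walkWeight w p) :
    x ≤ β * walkDist w s t := by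
  by_cases hβtop : β = ⊤
  · by_cases hd : walkDist w s t = 0
    · obtain ⟨k, p, h0, hl, hp⟩ := exists_walkWeight_eq_zero hd
      simpa [hd, hp] using h k p h0 hl
    · simp [hβtop, ENNReal.top_mul hd]
  · rw [mul_comm, ← ENNReal.div_le_iff hβ hβtop]
    exact le_walkDist fun k p h0 hl =>
      (ENNReal.div_le_iff hβ hβtop).2 (mul_comm β _ ▸ h k p h0 hl)

end Walks

structure IsRegionDecomposition {V I : Type*} (K : Set V) (S Kf : I → Set V)
    (v : I → V → V → ℝ≥0∞) : Prop where
  eq_top_of_not_mem : ∀ i a b, ¬ (a ∈ S i ∧ b ∈ S i) → v i a b = ⊤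
  inter_subset : ∀ i j, i ≠ j → S i ∩ S j ⊆ K
  inter_subset_terminals : ∀ i, S i ∩ K ⊆ Kf i

namespace IsRegionDecomposition

variable {V I : Type*} [Finite I] {K : Set V} {S Kf : I → Set V} {v : I → V → V → ℝ≥0∞}

lemma exists_eq_iInf (hR : IsRegionDecomposition K S Kf v) {a b : V}
    (h : ⨅ i, v i a b ≠ ⊤) : ∃ j, v j a b = ⨅ i, v i a b ∧ a ∈ S j ∧ b ∈ S j := by
  have : Nonempty I := by
    by_contra hI
    rw [not_nonempty_iff] at hI
    exact h (iInf_of_empty _)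
  obtain ⟨j, hj⟩ := exists_eq_ciInf_of_finite (f := fun i => v i a b)
  refine ⟨j, hj, not_not.1 fun hab => h ?_⟩
  rw [← hj, hR.eq_top_of_not_mem j a b hab]

variable {T : V → V → ℝ≥0∞} {β : ℝ≥0∞}

/-- Here `p 0` is reached from the terminal `q` inside region `i`. Where the walk passes into
another region `j`, it does so at a vertex of `S i ∩ S j ⊆ K`, a terminal of both regions, which
becomes the new `q`. -/
lemma walkDist_le_mul_add_walkWeight (hR : IsRegionDecomposition K S Kf v) (hβ : β ≠ 0)
    (hT : ∀ i, ∀ s ∈ Kf i, ∀ t ∈ Kf i, walkDist T s t ≤ β * walkDist (v i) s t)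
    {k : ℕ} (p : Fin (k + 1) → V) (hl : p (Fin.last k) ∈ K) {i : I} {q : V} (hq : q ∈ Kf i)
    (h0 : p 0 ∈ S i) :
    walkDist T q (p (Fin.last k)) ≤
      β * (walkDist (v i) q (p 0) + walkWeight (fun a b => ⨅ j, v j a b) p) := by
  induction k generalizing i q with
  | zero =>
    calc walkDist T q (p 0) ≤ β * walkDist (v i) q (p 0) :=
          hT i q hq _ (hR.inter_subset_terminals i ⟨h0, hl⟩)
      _ ≤ _ := by gcongr; exact le_self_add
  | succ k ih =>
    have htail := fun j r => ih (Fin.tail p) (by simpa [Fin.tail, Fin.succ_last] using hl) (i := j)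
      (q := r)
    rw [walkWeight_succ]
    set e := ⨅ j, v j (p 0) (p 1)
    by_cases he : e = ⊤
    · simp [he, ENNReal.mul_top hβ]
    obtain ⟨j, hj, hj0, hj1⟩ := hR.exists_eq_iInf he
    by_cases hji : j = i
    · subst hji
      calc walkDist T q (p (Fin.last (k + 1)))
          ≤ β * (walkDist (v j) q (p 1) + walkWeight _ (Fin.tail p)) := htail j q hq hj1
        _ ≤ β * (walkDist (v j) q (p 0) + e + walkWeight _ (Fin.tail p)) := by
          gcongr
          exact (walkDist_triangle _ _ (p 0) _).trans
            (add_le_add le_rfl ((walkDist_le_weight _ _ _).trans hj.le))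
        _ = _ := by rw [add_assoc]
    · have hK : p 0 ∈ K := hR.inter_subset j i hji ⟨hj0, h0⟩
      calc walkDist T q (p (Fin.last (k + 1)))
          ≤ walkDist T q (p 0) + walkDist T (p 0) (p (Fin.last (k + 1))) :=
            walkDist_triangle _ _ _ _
        _ ≤ β * walkDist (v i) q (p 0) +
            β * (walkDist (v j) (p 0) (p 1) + walkWeight _ (Fin.tail p)) :=
          add_le_add (hT i q hq _ (hR.inter_subset_terminals i ⟨h0, hK⟩))
            (htail j (p 0) (hR.inter_subset_terminals j ⟨hj0, hK⟩) hj1)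
        _ ≤ β * walkDist (v i) q (p 0) + β * (e + walkWeight _ (Fin.tail p)) := by
          gcongr
          exact (walkDist_le_weight _ _ _).trans hj.le
        _ = _ := by rw [← mul_add]

lemma walkDist_le_mul_walkWeight (hR : IsRegionDecomposition K S Kf v) (hβ : β ≠ 0)
    (hT : ∀ i, ∀ s ∈ Kf i, ∀ t ∈ Kf i, walkDist T s t ≤ β * walkDist (v i) s t)
    {k : ℕ} (p : Fin (k + 1) → V) (h0 : p 0 ∈ K) (hl : p (Fin.last k) ∈ K) :
    walkDist T (p 0) (p (Fin.last k)) ≤ β * walkWeight (fun a b => ⨅ j, v j a b) p := by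
  rcases k with _ | k
  · simp [walkDist_self]
  by_cases he : ⨅ j, v j (p 0) (p 1) = ⊤
  · simp [walkWeight_succ, he, ENNReal.mul_top hβ]
  obtain ⟨j, -, hj0, -⟩ := hR.exists_eq_iInf he
  simpa [walkDist_self] using
    hR.walkDist_le_mul_add_walkWeight hβ hT p hl (hR.inter_subset_terminals j ⟨hj0, h0⟩) hj0

theorem walkDist_le_mul_walkDist_iInf [Fintype V] (hR : IsRegionDecomposition K S Kf v)
    (hβ : β ≠ 0) (hT : ∀ i, ∀ s ∈ Kf i, ∀ t ∈ Kf i, walkDist T s t ≤ β * walkDist (v i) s t)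
    {s t : V} (hs : s ∈ K) (ht : t ∈ K) :
    walkDist T s t ≤ β * walkDist (fun a b => ⨅ j, v j a b) s t :=
  le_mul_walkDist hβ fun _ p h0 hl => by
    subst h0 hl
    exact hR.walkDist_le_mul_walkWeight hβ hT p hs ht

end IsRegionDecomposition

theorem distance_sparsifier_union_general
    {V I : Type*} [Fintype V] [Fintype I]
    (K : Set V) (α : ℝ≥0∞) (hα : 1 ≤ α)
    (Vf Wf Kf : I → Set V)
    (w wtil : I → V → V → ℝ≥0∞)
    (hwsupp : ∀ i a b, ¬ (a ∈ Vf i ∧ b ∈ Vf i) → w i a b = ⊤)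
    (hwtsupp : ∀ i a b, ¬ (a ∈ Wf i ∧ b ∈ Wf i) → wtil i a b = ⊤)
    (hshare : ∀ i j : I, i ≠ j →
      Vf i ∩ Vf j ⊆ K ∧ Vf i ∩ Wf j ⊆ K ∧ Wf i ∩ Wf j ⊆ K)
    (hbound : ∀ i : I, Vf i ∩ K ⊆ Kf i ∧ Wf i ∩ K ⊆ Kf i)
    (hquality : ∀ i : I, ∀ s t : V, s ∈ Kf i → t ∈ Kf i →
      walkDist (w i) s t ≤ walkDist (wtil i) s t ∧
      walkDist (wtil i) s t ≤ α * walkDist (w i) s t) :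
    ∀ s t : V, s ∈ K → t ∈ K →
      walkDist (fun a b => ⨅ i, w i a b) s t ≤ walkDist (fun a b => ⨅ i, wtil i a b) s t ∧
      walkDist (fun a b => ⨅ i, wtil i a b) s t ≤
        α * walkDist (fun a b => ⨅ i, w i a b) s t := by
  intro s t hs ht
  have hV : IsRegionDecomposition K Vf Kf w :=
    ⟨hwsupp, fun i j hij => (hshare i j hij).1, fun i => (hbound i).1⟩
  have hW : IsRegionDecomposition K Wf Kf wtil :=
    ⟨hwtsupp, fun i j hij => (hshare i j hij).2.2, fun i => (hbound i).2⟩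
  constructor
  · simpa using hW.walkDist_le_mul_walkDist_iInf one_ne_zero (fun i s hs t ht => by
      simpa using (walkDist_iInf_le _ i s t).trans (hquality i s t hs ht).1) hs ht
  · exact hV.walkDist_le_mul_walkDist_iInf (one_pos.trans_le hα).ne'
      (fun i s hs t ht => (walkDist_iInf_le _ i s t).trans (hquality i s t hs ht).2) hs ht

theorem distance_sparsifier_union
    {V I : Type*} [Fintype V] [Fintype I]
    (K : Set V) (α : ℝ≥0∞) (hα : 1 ≤ α)
    (Vf Wf Kf : I → Set V)
    (hKf : ∀ i : I, Kf i ⊆ K ∩ Vf i ∩ Wf i)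
    (w wtil : I → V → V → ℝ≥0∞)
    (hwsymm : ∀ i a b, w i a b = w i b a)
    (hwtsymm : ∀ i a b, wtil i a b = wtil i b a)
    (hwsupp : ∀ i a b, ¬ (a ∈ Vf i ∧ b ∈ Vf i) → w i a b = ⊤)
    (hwtsupp : ∀ i a b, ¬ (a ∈ Wf i ∧ b ∈ Wf i) → wtil i a b = ⊤)
    (hshare : ∀ i j : I, i ≠ j →
      Vf i ∩ Vf j ⊆ K ∧ Vf i ∩ Wf j ⊆ K ∧ Wf i ∩ Wf j ⊆ K)
    (hbound : ∀ i : I, Vf i ∩ K ⊆ Kf i ∧ Wf i ∩ K ⊆ Kf i)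
    (hquality : ∀ i : I, ∀ s t : V, s ∈ Kf i → t ∈ Kf i →
      walkDist (w i) s t ≤ walkDist (wtil i) s t ∧
      walkDist (wtil i) s t ≤ α * walkDist (w i) s t) :
    ∀ s t : V, s ∈ K → t ∈ K →
      walkDist (fun a b => ⨅ i, w i a b) s t ≤ walkDist (fun a b => ⨅ i, wtil i a b) s t ∧
      walkDist (fun a b => ⨅ i, wtil i a b) s t ≤
        α * walkDist (fun a b => ⨅ i, w i a b) s t :=
  distance_sparsifier_union_general K α hα Vf Wf Kf w wtil hwsupp hwtsupp hshare hbound hquality
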